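/- For every integer m ≥ 1, the pole order d of A(z)⁻¹ at z₀ equals m if and only if A⁽ᵐ⁾(z₀) is invertible and A⁽ᵐ⁻¹⁾(z₀) is not invertible. -/

import Mathlib

open scoped Topology

/-- `f` has a pole of order exactly `d` at `z₀`: near `z₀` (off `z₀`),
`f z = (z - z₀)⁻ᵈ • g z` for some function `g` analytic at `z₀` with `g z₀ ≠ 0`.
For `d = 0` this means `f` extends analytically across `z₀` with nonzero value. -/
def HasPoleOrderAt {E : Type*} [NormedAddCommGroup E] [NormedSpace ℂ E]
    (f : ℂ → E) (z₀ : ℂ) (d : ℕ) : Prop :=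
  ∃ g : ℂ → E, AnalyticAt ℂ g z₀ ∧ g z₀ ≠ 0 ∧
    ∀ᶠ z in 𝓝[≠] z₀, f z = ((z - z₀)⁻¹) ^ d • g z

/-!
Each quotient step lowers the pole order of the inverse by exactly one. If
`A⁽ᵏ⁾(z)⁻¹ = (z - z₀)^-(n+1) h(z)` with `h(z₀) ≠ 0`, then `h(z₀) A⁽ᵏ⁾(z₀) = 0`, so `h(z₀)`
vanishes on `ran A⁽ᵏ⁾(z₀) = ran P` and `h(z) P` is divisible by `z - z₀`. Since
`A⁽ᵏ⁺¹⁾(z)⁻¹ = A⁽ᵏ⁾(z)⁻¹ (P + (z - z₀) Q)`, the inverse of `A⁽ᵏ⁺¹⁾` has a pole of order `n`.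
Hence `A⁽ᵈ⁾(z)⁻¹` extends analytically across `z₀` (so `A⁽ᵈ⁾(z₀)` is invertible) while `A⁽ᵏ⁾(z₀)`
is not invertible for `k < d`; after step `d` the construction is stationary.
-/

open Filter

theorem AnalyticAt.dslope {𝕜 E : Type*} [NontriviallyNormedField 𝕜] [NormedAddCommGroup E]
    [NormedSpace 𝕜 E] {f : 𝕜 → E} {a : 𝕜} (hf : AnalyticAt 𝕜 f a) :
    AnalyticAt 𝕜 (dslope f a) a :=
  let ⟨_, hp⟩ := hf
  ⟨_, hp.has_fpower_series_dslope_fslope⟩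

namespace IsIdempotentElem

variable {𝕜 R : Type*} [Field 𝕜] [Ring R] [Algebra 𝕜 R] {p : R}

theorem add_smul_one_sub_mul_add_smul_one_sub (hp : IsIdempotentElem p) (a b : 𝕜) :
    (p + a • (1 - p)) * (p + b • (1 - p)) = p + (a * b) • (1 - p) := by
  simp only [add_mul, mul_add, smul_mul_assoc, mul_smul_comm, smul_smul, hp.eq,
    hp.mul_one_sub_self, hp.one_sub_mul_self, hp.one_sub.eq, smul_zero, add_zero, zero_add,
    mul_comm b a]

theorem isUnit_add_smul_one_sub (hp : IsIdempotentElem p) {c : 𝕜} (hc : c ≠ 0) :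
    IsUnit (p + c • (1 - p)) := by
  refine ⟨⟨p + c • (1 - p), p + c⁻¹ • (1 - p), ?_, ?_⟩, rfl⟩ <;>
    simp [hp.add_smul_one_sub_mul_add_smul_one_sub, hc]

end IsIdempotentElem

section NormedAlgebra

variable {R : Type*} [NormedRing R] [NormedAlgebra ℂ R] {F G g : ℂ → R} {z₀ : ℂ} {n : ℕ}
  {p : R}

theorem eventually_isUnit_of_eq_mul (hp : IsIdempotentElem p)
    (hunit : ∀ᶠ z in 𝓝[≠] z₀, IsUnit (F z))
    (hfac : ∀ᶠ z in 𝓝 z₀, F z = (p + (z - z₀) • (1 - p)) * G z) :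
    ∀ᶠ z in 𝓝[≠] z₀, IsUnit (G z) := by
  filter_upwards [hunit, nhdsWithin_le_nhds hfac, self_mem_nhdsWithin] with z hFz hz hne
  obtain ⟨u, hu⟩ := hp.isUnit_add_smul_one_sub (sub_ne_zero.mpr hne)
  rwa [hz, ← hu, Units.isUnit_units_mul] at hFz

theorem mul_eq_zero_pow_smul_one_of_inverse_eq (hg : ContinuousAt g z₀)
    (hF : ContinuousAt F z₀) (hunit : ∀ᶠ z in 𝓝[≠] z₀, IsUnit (F z))
    (hev : ∀ᶠ z in 𝓝[≠] z₀, Ring.inverse (F z) = (z - z₀)⁻¹ ^ n • g z) :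
    g z₀ * F z₀ = (0 : ℂ) ^ n • 1 ∧ F z₀ * g z₀ = (0 : ℂ) ^ n • 1 := by
  have hcont : ContinuousAt (fun z : ℂ => (z - z₀) ^ n • (1 : R)) z₀ := by fun_prop
  have hg_eq : ∀ᶠ z in 𝓝[≠] z₀, g z = (z - z₀) ^ n • Ring.inverse (F z) := by
    filter_upwards [hev, self_mem_nhdsWithin] with z hz hne
    rw [hz, smul_smul, ← mul_pow, mul_inv_cancel₀ (sub_ne_zero.mpr hne), one_pow, one_smul]
  have hleft : (fun z => g z * F z) =ᶠ[𝓝[≠] z₀] fun z => (z - z₀) ^ n • (1 : R) := by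
    filter_upwards [hg_eq, hunit] with z hz hu
    rw [hz, smul_mul_assoc, Ring.inverse_mul_cancel _ hu]
  have hright : (fun z => F z * g z) =ᶠ[𝓝[≠] z₀] fun z => (z - z₀) ^ n • (1 : R) := by
    filter_upwards [hg_eq, hunit] with z hz hu
    rw [hz, mul_smul_comm, Ring.mul_inverse_cancel _ hu]
  constructor
  · simpa using (((hg.mul hF).eventuallyEq_nhds_iff_eventuallyEq_nhdsNE hcont).1 hleft).eq_of_nhds
  · simpa using (((hF.mul hg).eventuallyEq_nhds_iff_eventuallyEq_nhdsNE hcont).1 hright).eq_of_nhds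

theorem isUnit_of_hasPoleOrderAt_inverse_zero (hF : ContinuousAt F z₀)
    (hunit : ∀ᶠ z in 𝓝[≠] z₀, IsUnit (F z))
    (h : HasPoleOrderAt (fun z => Ring.inverse (F z)) z₀ 0) : IsUnit (F z₀) := by
  obtain ⟨g, hg, -, hev⟩ := h
  obtain ⟨hleft, hright⟩ := mul_eq_zero_pow_smul_one_of_inverse_eq hg.continuousAt hF hunit hev
  rw [pow_zero, one_smul] at hleft hright
  exact ⟨⟨F z₀, g z₀, hright, hleft⟩, rfl⟩

theorem not_isUnit_of_hasPoleOrderAt_inverse (hF : ContinuousAt F z₀)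
    (hunit : ∀ᶠ z in 𝓝[≠] z₀, IsUnit (F z))
    (h : HasPoleOrderAt (fun z => Ring.inverse (F z)) z₀ n) (hn : n ≠ 0) : ¬ IsUnit (F z₀) := by
  obtain ⟨g, hg, hg0, hev⟩ := h
  have hzero := (mul_eq_zero_pow_smul_one_of_inverse_eq hg.continuousAt hF hunit hev).1
  rw [zero_pow hn, zero_smul] at hzero
  exact fun hu => hg0 (hu.mul_left_eq_zero.mp hzero)

theorem exists_mul_add_smul_one_sub_eq_smul {h : ℂ → R} (hh : AnalyticAt ℂ h z₀)
    (hp : IsIdempotentElem p) (h0 : h z₀ * p = 0) :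
    ∃ g : ℂ → R, AnalyticAt ℂ g z₀ ∧ g z₀ * (1 - p) = h z₀ ∧
      ∀ z, h z * (p + (z - z₀) • (1 - p)) = (z - z₀) • g z := by
  set D := dslope (fun z => h z * p) z₀
  have hD : ∀ z, (z - z₀) • D z = h z * p := fun z => by
    rw [sub_smul_dslope, h0, sub_zero]
  refine ⟨fun z => D z * p + h z * (1 - p),
    ((hh.mul analyticAt_const).dslope.mul analyticAt_const).add (hh.mul analyticAt_const),
    ?_, fun z => ?_⟩
  · rw [add_mul, mul_assoc, hp.mul_one_sub_self, mul_zero, zero_add, mul_assoc, hp.one_sub.eq,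
      mul_sub, h0, mul_one, sub_zero]
  · rw [smul_add, ← smul_mul_assoc, hD, mul_assoc, hp.eq, mul_add, mul_smul_comm]

end NormedAlgebra

section Operators

variable {E : Type*} [NormedAddCommGroup E] [NormedSpace ℂ E] {F G : ℂ → E →L[ℂ] E}
  {z₀ : ℂ} {n : ℕ} {p : E →L[ℂ] E}

theorem ContinuousLinearMap.mul_eq_zero_of_range_le {a b c : E →L[ℂ] E} (hab : a * b = 0)
    (hcb : LinearMap.range (c : E →ₗ[ℂ] E) ≤ LinearMap.range (b : E →ₗ[ℂ] E)) : a * c = 0 := by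
  ext x
  obtain ⟨y, hy⟩ := hcb (LinearMap.mem_range_self (c : E →ₗ[ℂ] E) x)
  change a (c x) = 0
  rw [← ContinuousLinearMap.coe_coe c, ← hy]
  exact DFunLike.congr_fun hab y

theorem hasPoleOrderAt_inverse_of_eq_mul (hp : IsIdempotentElem p)
    (hrange : LinearMap.range (p : E →ₗ[ℂ] E) ≤ LinearMap.range (F z₀ : E →ₗ[ℂ] E))
    (hF : ContinuousAt F z₀) (hunit : ∀ᶠ z in 𝓝[≠] z₀, IsUnit (F z))
    (hfac : ∀ᶠ z in 𝓝 z₀, F z = (p + (z - z₀) • (1 - p)) * G z)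
    (h : HasPoleOrderAt (fun z => Ring.inverse (F z)) z₀ (n + 1)) :
    HasPoleOrderAt (fun z => Ring.inverse (G z)) z₀ n := by
  obtain ⟨h, hh, hh0, hev⟩ := h
  have hzero := (mul_eq_zero_pow_smul_one_of_inverse_eq hh.continuousAt hF hunit hev).1
  rw [zero_pow n.succ_ne_zero, zero_smul] at hzero
  obtain ⟨g, hg, hgz₀, hmul⟩ := exists_mul_add_smul_one_sub_eq_smul hh hp
    (ContinuousLinearMap.mul_eq_zero_of_range_le hzero hrange)
  refine ⟨g, hg, fun hg0 => hh0 (by rw [← hgz₀, hg0, zero_mul]), ?_⟩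
  filter_upwards [hev, nhdsWithin_le_nhds hfac, self_mem_nhdsWithin] with z hz hFz hne
  have hne' : z - z₀ ≠ 0 := sub_ne_zero.mpr hne
  have hM := hp.isUnit_add_smul_one_sub hne'
  rw [← Ring.inverse_mul_cancel_right _ (Ring.inverse (G z)) hM, ← Ring.inverse_mul (.inl hM),
    ← hFz, hz, smul_mul_assoc, hmul, smul_smul, pow_succ, mul_assoc, inv_mul_cancel₀ hne',
    mul_one]

end Operators

theorem isUnit_of_le_of_isUnit_imp_succ_eq {M : Type*} [Monoid M] {a : ℕ → M}
    (hstab : ∀ k, IsUnit (a k) → a (k + 1) = a k) {k l : ℕ} (hk : IsUnit (a k)) (hkl : k ≤ l) :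
    IsUnit (a l) := by
  induction l, hkl using Nat.le_induction with
  | base => exact hk
  | succ l _ ih => rwa [hstab l ih]

theorem stmt9_general
    {B : Type*} [NormedAddCommGroup B] [NormedSpace ℂ B]
    (U : Set ℂ) (hU : IsOpen U) (z₀ : ℂ) (hz₀U : z₀ ∈ U)
    (A : ℂ → (B →L[ℂ] B))
    (hInv : ∀ᶠ z in 𝓝[≠] z₀, IsUnit (A z))
    (d : ℕ)
    (hpole : HasPoleOrderAt (fun z => Ring.inverse (A z)) z₀ d)
    (P : ℕ → (B →L[ℂ] B)) (Aq : ℕ → ℂ → (B →L[ℂ] B))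
    (hAq0 : Aq 0 = A)
    (hPproj : ∀ k, P (k + 1) * P (k + 1) = P (k + 1))
    (hPrange : ∀ k, LinearMap.range (P (k + 1) : B →ₗ[ℂ] B) = LinearMap.range (Aq k z₀ : B →ₗ[ℂ] B))
    (hAqAnalytic : ∀ k, AnalyticOnNhd ℂ (Aq k) U)
    (hAqFact : ∀ k, ∀ z ∈ U,
      Aq k z = (P (k + 1) + (z - z₀) • ((1 : B →L[ℂ] B) - P (k + 1))) * Aq (k + 1) z)
    (hstab : ∀ k, IsUnit (Aq k z₀) → P (k + 1) = 1 ∧ Aq (k + 1) = Aq k)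
    :
    ∀ m : ℕ, 1 ≤ m →
      (d = m ↔ (IsUnit (Aq m z₀) ∧ ¬ IsUnit (Aq (m - 1) z₀))) := by
  subst hAq0
  have hcont k : ContinuousAt (Aq k) z₀ := (hAqAnalytic k z₀ hz₀U).continuousAt
  have hfac k : ∀ᶠ z in 𝓝 z₀, Aq k z = (P (k + 1) + (z - z₀) • (1 - P (k + 1))) * Aq (k + 1) z :=
    eventually_of_mem (hU.mem_nhds hz₀U) (hAqFact k)
  have hunit k : ∀ᶠ z in 𝓝[≠] z₀, IsUnit (Aq k z) := by
    induction k with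
    | zero => exact hInv
    | succ k ih => exact eventually_isUnit_of_eq_mul (hPproj k) ih (hfac k)
  have hpoles k (hk : k ≤ d) : HasPoleOrderAt (fun z => Ring.inverse (Aq k z)) z₀ (d - k) := by
    induction k with
    | zero => exact hpole
    | succ k ih =>
      refine hasPoleOrderAt_inverse_of_eq_mul (hPproj k) (hPrange k).le (hcont k) (hunit k)
        (hfac k) ?_
      rw [← Nat.sub_sub, Nat.sub_add_cancel (by omega)]
      exact ih (by omega)
  have hunit_d : IsUnit (Aq d z₀) :=
    isUnit_of_hasPoleOrderAt_inverse_zero (hcont d) (hunit d) (by simpa using hpoles d le_rfl)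
  have hnot k (hk : k < d) : ¬ IsUnit (Aq k z₀) :=
    not_isUnit_of_hasPoleOrderAt_inverse (hcont k) (hunit k) (hpoles k hk.le) (by omega)
  have hunit_ge {k : ℕ} (hk : d ≤ k) : IsUnit (Aq k z₀) :=
    isUnit_of_le_of_isUnit_imp_succ_eq (a := fun k => Aq k z₀)
      (fun k hk => congrFun (hstab k hk).2 z₀) hunit_d hk
  intro m hm
  constructor
  · rintro rfl
    exact ⟨hunit_d, hnot _ (by omega)⟩
  · rintro ⟨hm_unit, hm_pred⟩
    by_contra hdm
    rcases Nat.lt_or_gt_of_ne hdm with hlt | hgt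
    · exact hm_pred (hunit_ge (by omega))
    · exact hnot m hgt hm_unit

/-- for every integer `m ≥ 1`, the pole order `d` of `A(z)⁻¹` at `z₀` equals `m`
if and only if `A⁽ᵐ⁾(z₀)` is invertible and `A⁽ᵐ⁻¹⁾(z₀)` is not invertible. -/
theorem stmt9
    {B : Type*} [NormedAddCommGroup B] [NormedSpace ℂ B] [CompleteSpace B]
    (U : Set ℂ) (hU : IsOpen U) (hUconn : IsConnected U) (z₀ : ℂ) (hz₀U : z₀ ∈ U)
    (A : ℂ → (B →L[ℂ] B)) (hA : AnalyticOnNhd ℂ A U)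
    (Acoef : ℕ → (B →L[ℂ] B))
    (hAcoef : ∀ᶠ z in 𝓝 z₀, HasSum (fun j : ℕ => (z - z₀) ^ j • Acoef j) (A z))
    (hFred : ∀ z ∈ U, FiniteDimensional ℂ (LinearMap.ker (A z : B →ₗ[ℂ] B)) ∧
      IsClosed ((LinearMap.range (A z : B →ₗ[ℂ] B) : Submodule ℂ B) : Set B) ∧
      FiniteDimensional ℂ (B ⧸ LinearMap.range (A z : B →ₗ[ℂ] B)))
    (hInv : ∀ᶠ z in 𝓝[≠] z₀, IsUnit (A z))
    (hNotInv : ¬ IsUnit (A z₀))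
    (d : ℕ) (hd : 1 ≤ d)
    (hpole : HasPoleOrderAt (fun z => Ring.inverse (A z)) z₀ d)
    (P : ℕ → (B →L[ℂ] B)) (Aq : ℕ → ℂ → (B →L[ℂ] B))
    (hAq0 : Aq 0 = A) (hP0 : P 0 = 0)
    (hPproj : ∀ k, P (k + 1) * P (k + 1) = P (k + 1))
    (hPrange : ∀ k, LinearMap.range (P (k + 1) : B →ₗ[ℂ] B) = LinearMap.range (Aq k z₀ : B →ₗ[ℂ] B))
    (hPker : ∀ k, LinearMap.ker (P (k + 1) : B →ₗ[ℂ] B) ≤ LinearMap.ker (P k : B →ₗ[ℂ] B))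
    (hAqAnalytic : ∀ k, AnalyticOnNhd ℂ (Aq k) U)
    (hAqFact : ∀ k, ∀ z ∈ U,
      Aq k z = (P (k + 1) + (z - z₀) • ((1 : B →L[ℂ] B) - P (k + 1))) * Aq (k + 1) z)
    (hstab : ∀ k, IsUnit (Aq k z₀) → P (k + 1) = 1 ∧ Aq (k + 1) = Aq k)
    :
    ∀ m : ℕ, 1 ≤ m →
      (d = m ↔ (IsUnit (Aq m z₀) ∧ ¬ IsUnit (Aq (m - 1) z₀))) :=
  stmt9_general U hU z₀ hz₀U A hInv d hpole P Aq hAq0 hPproj hPrange hAqAnalytic hAqFact hstab
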